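/- Let ω := e^{2πi/3}, Λ := ℤω + ℤ ⊂ ℂ, and Λ* := {γ ∈ ℂ : ⟨γ,λ⟩ ∈ 2πℤ for all λ ∈ Λ}. Let k ∈ Λ*. Then {u : ℂ → ℂ smooth, Λ-periodic, (2D_{z̄}+k)((2D_{z̄}+k)u) = 0} = {z ↦ c·e^{-i⟨z,k⟩} : c ∈ ℂ}; in particular this solution space is a one-dimensional ℂ-vector space spanned by z ↦ e^{-i⟨z,k⟩}. -/

import Mathlib

/-- `⟨z,w⟩ = Re (z·w̄)`. -/
noncomputable def ip (z w : ℂ) : ℝ := (z * (starRingEnd ℂ) w).re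

/-- `(2D_{z̄}f)(z) = (1/i)(∂_{x₁}f(z) + i∂_{x₂}f(z))`, identifying `ℂ ≅ ℝ²`. -/
noncomputable def Dbar2 (f : ℂ → ℂ) (z : ℂ) : ℂ :=
  Complex.I⁻¹ * (fderiv ℝ f z 1 + Complex.I * fderiv ℝ f z Complex.I)

noncomputable def omega : ℂ := Complex.exp (2 * Real.pi * Complex.I / 3)

/-- `Λ = ℤω ⊕ ℤ`. -/
noncomputable def Lambda : Set ℂ := {w | ∃ m n : ℤ, w = (m : ℂ) * omega + (n : ℂ)}

/-- The dual lattice `Λ* = {γ : ⟨γ,λ⟩ ∈ 2πℤ for all λ ∈ Λ}`. -/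
noncomputable def LambdaStar : Set ℂ :=
  {γ | ∀ l ∈ Lambda, ∃ n : ℤ, ip γ l = 2 * Real.pi * (n : ℝ)}

/-! Multiplication by the plane wave `e^{i⟨z,k⟩}`, which is `Λ`-periodic because `k ∈ Λ*`,
conjugates `2D_{z̄} + k` to `2D_{z̄}`; so it suffices to show that a smooth `Λ`-periodic `v` with
`D_{z̄}² v = 0` is constant. Then `D_{z̄} v` is holomorphic and periodic, hence a constant `c` by
Liouville. Now `v + (c / 2i) z̄` is holomorphic with constant increments along `Λ`, so its
derivative is periodic, hence constant, and the function is affine; periodicity of `v` along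
the `ℝ`-basis `1, ω` of `ℂ` then forces both the affine part and `c` to vanish. -/

open Complex ComplexConjugate Bornology
open scoped ContDiff

lemma ip_comm (z w : ℂ) : ip z w = ip w z := by
  simp only [ip, mul_re, conj_re, conj_im]; ring

lemma ip_add_left (z z' w : ℂ) : ip (z + z') w = ip z w + ip z' w := by
  simp [ip, add_mul]

lemma ip_neg_left (z w : ℂ) : ip (-z) w = -ip z w := by
  simp [ip]

lemma ip_neg_right (z w : ℂ) : ip z (-w) = -ip z w := by
  simp [ip]

lemma ip_one_left (k : ℂ) : ip 1 k = k.re := by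
  simp [ip]

lemma ip_I_left (k : ℂ) : ip I k = k.im := by
  simp [ip]

lemma neg_mem_LambdaStar {k : ℂ} (hk : k ∈ LambdaStar) : -k ∈ LambdaStar := fun l hl => by
  obtain ⟨n, hn⟩ := hk l hl
  exact ⟨-n, by rw [ip_neg_left, hn]; push_cast; ring⟩

noncomputable def ipLeftCLM (k : ℂ) : ℂ →L[ℝ] ℝ :=
  reCLM ∘L (conj k • ContinuousLinearMap.id ℝ ℂ)

@[simp]
lemma ipLeftCLM_apply (k z : ℂ) : ipLeftCLM k z = ip z k := by
  simp [ipLeftCLM, ip, mul_comm]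

noncomputable def planeWave (k z : ℂ) : ℂ := exp (-(I * (ip z k : ℂ)))

lemma planeWave_eq_exp_comp_clm (k : ℂ) :
    planeWave k = fun z => exp ((-I) • (ofRealCLM ∘L ipLeftCLM k) z) := by
  ext z; simp [planeWave]

lemma hasFDerivAt_planeWave (k z : ℂ) :
    HasFDerivAt (planeWave k) (planeWave k z • (-I) • (ofRealCLM ∘L ipLeftCLM k)) z := by
  rw [planeWave_eq_exp_comp_clm]
  exact (((ofRealCLM ∘L ipLeftCLM k).hasFDerivAt (x := z)).const_smul (-I)).cexp

lemma contDiff_planeWave (k : ℂ) {n : WithTop ℕ∞} : ContDiff ℝ n (planeWave k) := by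
  rw [planeWave_eq_exp_comp_clm]
  exact ((ofRealCLM ∘L ipLeftCLM k).contDiff.const_smul (-I)).cexp

lemma planeWave_mul_planeWave_neg (k z : ℂ) : planeWave k z * planeWave (-k) z = 1 := by
  rw [planeWave, planeWave, ← exp_add, ip_neg_right, ofReal_neg, mul_neg, neg_neg,
    neg_add_cancel, exp_zero]

lemma planeWave_add_of_ip_eq {k γ : ℂ} {n : ℤ} (h : ip γ k = 2 * Real.pi * n) (z : ℂ) :
    planeWave k (z + γ) = planeWave k z := by
  have hγ : exp (-(I * (ip γ k : ℂ))) = 1 := by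
    rw [h, ← exp_int_mul_two_pi_mul_I (-n)]
    push_cast
    ring_nf
  rw [planeWave, planeWave, ip_add_left, ofReal_add, mul_add, neg_add, exp_add, hγ, mul_one]

lemma planeWave_add_of_mem_LambdaStar {k γ : ℂ} (hk : k ∈ LambdaStar) (hγ : γ ∈ Lambda)
    (z : ℂ) : planeWave k (z + γ) = planeWave k z := by
  obtain ⟨n, hn⟩ := hk γ hγ
  exact planeWave_add_of_ip_eq (n := n) (by rw [ip_comm, hn]) z

section Dbar2

variable {f g : ℂ → ℂ} {z : ℂ}

lemma HasFDerivAt.dbar2_eq {L : ℂ →L[ℝ] ℂ} (h : HasFDerivAt f L z) :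
    Dbar2 f z = I⁻¹ * (L 1 + I * L I) := by
  rw [Dbar2, h.fderiv]

lemma dbar2_const (c z : ℂ) : Dbar2 (fun _ => c) z = 0 := by
  simp [Dbar2]

lemma dbar2_add (hf : DifferentiableAt ℝ f z) (hg : DifferentiableAt ℝ g z) :
    Dbar2 (fun w => f w + g w) z = Dbar2 f z + Dbar2 g z := by
  rw [HasFDerivAt.dbar2_eq (f := fun w => f w + g w) (hf.hasFDerivAt.add hg.hasFDerivAt),
    hf.hasFDerivAt.dbar2_eq, hg.hasFDerivAt.dbar2_eq]
  simp only [add_apply]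
  ring

lemma dbar2_mul (hf : DifferentiableAt ℝ f z) (hg : DifferentiableAt ℝ g z) :
    Dbar2 (fun w => f w * g w) z = Dbar2 f z * g z + f z * Dbar2 g z := by
  rw [HasFDerivAt.dbar2_eq (f := fun w => f w * g w) (hf.hasFDerivAt.mul hg.hasFDerivAt),
    hf.hasFDerivAt.dbar2_eq, hg.hasFDerivAt.dbar2_eq]
  simp only [add_apply, smul_apply, smul_eq_mul]
  ring

lemma dbar2_const_mul (c : ℂ) (hf : DifferentiableAt ℝ f z) :
    Dbar2 (fun w => c * f w) z = c * Dbar2 f z := by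
  rw [dbar2_mul (differentiableAt_const c) hf, dbar2_const, zero_mul, zero_add]

lemma dbar2_conj (z : ℂ) : Dbar2 (fun w => conj w) z = -2 * I := by
  rw [HasFDerivAt.dbar2_eq (f := fun w => conj w)
    (conjCLE.toContinuousLinearMap.hasFDerivAt (x := z))]
  simp only [ContinuousLinearEquiv.coe_coe, conjCLE_apply, map_one, conj_I, inv_I]
  linear_combination I * I_sq

lemma dbar2_planeWave (k z : ℂ) : Dbar2 (planeWave k) z = -k * planeWave k z := by
  rw [(hasFDerivAt_planeWave k z).dbar2_eq]
  simp only [smul_apply, ContinuousLinearMap.comp_apply,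
    ipLeftCLM_apply, ofRealCLM_apply, smul_eq_mul, ip_one_left, ip_I_left, inv_I]
  linear_combination (planeWave k z * k.re + I * planeWave k z * k.im) * I_sq
    - planeWave k z * re_add_im k

lemma dbar2_planeWave_neg_mul {k : ℂ} (hf : DifferentiableAt ℝ f z) :
    Dbar2 (fun w => planeWave (-k) w * f w) z = planeWave (-k) z * (Dbar2 f z + k * f z) := by
  rw [dbar2_mul ((contDiff_planeWave (-k) (n := 1)).differentiable one_ne_zero z) hf,
    dbar2_planeWave]
  ring

lemma ContDiff.dbar2 {m n : WithTop ℕ∞} (hf : ContDiff ℝ n f) (hmn : m + 1 ≤ n) :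
    ContDiff ℝ m (Dbar2 f) := by
  have hf' := hf.fderiv_right hmn
  exact contDiff_const.mul ((hf'.clm_apply contDiff_const).add
    (contDiff_const.mul (hf'.clm_apply contDiff_const)))

lemma dbar2_add_of_periodic {γ : ℂ} (hf : ∀ w, f (w + γ) = f w) (z : ℂ) :
    Dbar2 f (z + γ) = Dbar2 f z := by
  rw [Dbar2, Dbar2, ← fderiv_comp_add_right, funext hf]

lemma differentiable_of_dbar2_eq_zero (hf : Differentiable ℝ f) (h : ∀ z, Dbar2 f z = 0) :
    Differentiable ℂ f := by
  refine fun z => differentiableAt_complex_iff_differentiableAt_real.2 ⟨hf z, ?_⟩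
  have hz := h z
  rw [Dbar2, mul_eq_zero, or_iff_right (inv_ne_zero I_ne_zero)] at hz
  rw [smul_eq_mul]
  linear_combination (-I) * hz + fderiv ℝ f z I * I_sq

end Dbar2

lemma omega_im : omega.im = √3 / 2 := by
  have h : 2 * Real.pi * I / 3 = ((Real.pi - Real.pi / 3 : ℝ) : ℂ) * I := by push_cast; ring
  rw [omega, h, exp_ofReal_mul_I_im, Real.sin_pi_sub, Real.sin_pi_div_three]

lemma one_mem_Lambda : (1 : ℂ) ∈ Lambda := ⟨0, 1, by simp⟩

lemma omega_mem_Lambda : omega ∈ Lambda := ⟨1, 0, by simp⟩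

lemma exists_mem_Lambda_norm_sub_le (z : ℂ) : ∃ γ ∈ Lambda, ‖z - γ‖ ≤ 2 := by
  have hω : 0 < omega.im := by rw [omega_im]; positivity
  have hω' : omega.im ≤ 1 := by
    rw [omega_im, div_le_one two_pos, Real.sqrt_le_left (by norm_num)]; norm_num
  set m : ℤ := round (z.im / omega.im)
  set n : ℤ := round ((z - m * omega).re)
  refine ⟨m * omega + n, ⟨m, n, rfl⟩, ?_⟩
  have him : |(z - (m * omega + n)).im| ≤ 1 := by
    have h : (z - (m * omega + n)).im = omega.im * (z.im / omega.im - m) := by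
      simp only [sub_im, add_im, mul_im, intCast_re, intCast_im]
      field_simp
      ring
    rw [h, abs_mul, abs_of_pos hω]
    nlinarith [abs_sub_round (z.im / omega.im), abs_nonneg (z.im / omega.im - m)]
  have hre : |(z - (m * omega + n)).re| ≤ 1 / 2 := by
    rw [← sub_sub, sub_re _ (n : ℂ), intCast_re]
    exact abs_sub_round _
  calc ‖z - (m * omega + n)‖ ≤ |(z - (m * omega + n)).re| + |(z - (m * omega + n)).im| :=
        norm_le_abs_re_add_abs_im _
    _ ≤ 2 := by linarith

lemma isBounded_range_of_periodic {E : Type*} [PseudoMetricSpace E] {f : ℂ → E}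
    (hf : Continuous f) (hp : ∀ z, ∀ γ ∈ Lambda, f (z + γ) = f z) :
    IsBounded (Set.range f) := by
  refine ((isCompact_closedBall (0 : ℂ) 2).image hf).isBounded.subset ?_
  rintro _ ⟨z, rfl⟩
  obtain ⟨γ, hγ, hz⟩ := exists_mem_Lambda_norm_sub_le z
  exact ⟨z - γ, by simpa using hz, by simpa using (hp (z - γ) γ hγ).symm⟩

lemma eq_of_periodic_of_differentiable {f : ℂ → ℂ} (hf : Differentiable ℂ f)
    (hp : ∀ z, ∀ γ ∈ Lambda, f (z + γ) = f z) (z w : ℂ) : f z = f w :=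
  hf.apply_eq_apply_of_bounded (isBounded_range_of_periodic hf.continuous hp) z w

lemma eq_mul_add_of_differentiable_of_add_Lambda {G ℓ : ℂ → ℂ} (hG : Differentiable ℂ G)
    (hℓ : ∀ z, ∀ γ ∈ Lambda, G (z + γ) = G z + ℓ γ) (z : ℂ) :
    G z = deriv G 0 * z + G 0 := by
  have hG' : ∀ z, deriv G z = deriv G 0 := by
    refine fun z => eq_of_periodic_of_differentiable hG.deriv (fun w γ hγ => ?_) z 0
    rw [← deriv_comp_add_const, funext fun w => hℓ w γ hγ, deriv_add_const]
  have hH : ∀ z, deriv (fun w => G w - deriv G 0 * w) z = 0 := fun z => by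
    rw [HasDerivAt.deriv (f := fun w => G w - deriv G 0 * w)
      ((hG z).hasDerivAt.sub ((hasDerivAt_id' z).const_mul (deriv G 0))), hG', mul_one, sub_self]
  have := is_const_of_deriv_eq_zero (by fun_prop) hH z 0
  simp only [mul_zero, sub_zero] at this
  linear_combination this

lemma eq_of_periodic_of_dbar2_eq_const {v : ℂ → ℂ} (hv : Differentiable ℝ v)
    (hp : ∀ z, ∀ γ ∈ Lambda, v (z + γ) = v z) {c : ℂ} (hc : ∀ z, Dbar2 v z = c) (z : ℂ) :
    v z = v 0 := by
  set a := c / (2 * I)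
  have ha : a * (2 * I) = c := div_mul_cancel₀ c (by simp)
  set G : ℂ → ℂ := fun w => v w + a * conj w
  have hconj : Differentiable ℝ (fun w : ℂ => a * conj w) :=
    (differentiable_const a).mul conjCLE.toContinuousLinearMap.differentiable
  have hG : Differentiable ℂ G := by
    refine differentiable_of_dbar2_eq_zero (hv.add hconj) fun w => ?_
    rw [dbar2_add (hv w) (hconj w), hc,
      dbar2_const_mul (f := fun w => conj w) a conjCLE.toContinuousLinearMap.differentiableAt,
      dbar2_conj]
    linear_combination (-1 : ℂ) * ha
  have hGaff := eq_mul_add_of_differentiable_of_add_Lambda hG (ℓ := fun γ => a * conj γ)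
    fun w γ hγ => by simp only [G, hp w γ hγ, map_add]; ring
  have hv_eq : ∀ w, v w = deriv G 0 * w - a * conj w + v 0 := fun w => by
    have := hGaff w
    simp only [G, map_zero, mul_zero, add_zero] at this
    linear_combination this
  have h1 := hp 0 1 one_mem_Lambda
  have hω := hp 0 omega omega_mem_Lambda
  rw [zero_add, hv_eq, hv_eq 0] at h1 hω
  simp only [map_one, map_zero, mul_zero, mul_one] at h1 hω
  have ha_omega : a * (omega - conj omega) = 0 := by linear_combination hω - omega * h1
  have hω_ne : omega - conj omega ≠ 0 := by
    rw [sub_conj, omega_im]; simp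
  have ha0 : a = 0 := (mul_eq_zero.1 ha_omega).resolve_right hω_ne
  rw [hv_eq, ha0, show deriv G 0 = 0 by linear_combination h1 + ha0]
  ring

lemma eq_of_periodic_of_dbar2_dbar2_eq_zero {v : ℂ → ℂ} (hv : ContDiff ℝ ∞ v)
    (hp : ∀ z, ∀ γ ∈ Lambda, v (z + γ) = v z) (h : ∀ z, Dbar2 (Dbar2 v) z = 0) (z : ℂ) :
    v z = v 0 := by
  have hDv : ContDiff ℝ ∞ (Dbar2 v) := hv.dbar2 le_rfl
  have hDv_hol := differentiable_of_dbar2_eq_zero (hDv.differentiable (by simp)) h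
  refine eq_of_periodic_of_dbar2_eq_const (hv.differentiable (by simp)) hp (c := Dbar2 v 0)
    (fun w => eq_of_periodic_of_differentiable hDv_hol ?_ w 0) z
  exact fun w γ hγ => dbar2_add_of_periodic (fun w => hp w γ hγ) w

lemma exists_eq_const_mul_planeWave {k : ℂ} (hk : k ∈ LambdaStar) {u : ℂ → ℂ}
    (hu : ContDiff ℝ ∞ u) (hp : ∀ z, ∀ γ ∈ Lambda, u (z + γ) = u z)
    (hker : ∀ z, Dbar2 (fun w => Dbar2 u w + k * u w) z + k * (Dbar2 u z + k * u z) = 0) :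
    ∃ c, u = fun z => c * planeWave k z := by
  set v : ℂ → ℂ := fun z => planeWave (-k) z * u z
  have hDu : ContDiff ℝ ∞ (fun w => Dbar2 u w + k * u w) := (hu.dbar2 le_rfl).add (by fun_prop)
  have hDv : Dbar2 v = fun z => planeWave (-k) z * (Dbar2 u z + k * u z) :=
    funext fun z => dbar2_planeWave_neg_mul (hu.differentiable (by simp) z)
  have hv : ∀ z, v z = v 0 := by
    refine eq_of_periodic_of_dbar2_dbar2_eq_zero ((contDiff_planeWave _).mul hu)
      (fun z γ hγ => ?_) (fun z => ?_)
    · simp only [v, planeWave_add_of_mem_LambdaStar (neg_mem_LambdaStar hk) hγ, hp z γ hγ]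
    · rw [hDv, dbar2_planeWave_neg_mul (hDu.differentiable (by simp) z), hker, mul_zero]
  refine ⟨v 0, funext fun z => ?_⟩
  rw [← hv z, mul_comm, ← mul_assoc, planeWave_mul_planeWave_neg, one_mul]

lemma dbar2_const_mul_planeWave_add (c k z : ℂ) :
    Dbar2 (fun w => c * planeWave k w) z + k * (c * planeWave k z) = 0 := by
  rw [dbar2_const_mul c ((contDiff_planeWave k (n := 1)).differentiable one_ne_zero z),
    dbar2_planeWave]
  ring

/-- for `k ∈ Λ*`, the smooth `Λ`-periodic kernel of `(2D_{z̄}+k)²` is exactly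
the one-dimensional space `ℂ · e^{-i⟨z,k⟩}`. -/
theorem kernel_on_dual_lattice
    (k : ℂ) (hk : k ∈ LambdaStar) :
    {u : ℂ → ℂ | ContDiff ℝ (⊤ : ℕ∞) u ∧ (∀ z : ℂ, ∀ γ ∈ Lambda, u (z + γ) = u z) ∧
        ∀ z : ℂ, Dbar2 (fun w => Dbar2 u w + k * u w) z + k * (Dbar2 u z + k * u z) = 0}
      = {u : ℂ → ℂ | ∃ c : ℂ, u = fun z => c * Complex.exp (-(Complex.I * (ip z k : ℂ)))} := by
  change _ = {u : ℂ → ℂ | ∃ c : ℂ, u = fun z => c * planeWave k z}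
  ext u
  constructor
  · rintro ⟨hu, hp, hker⟩
    exact exists_eq_const_mul_planeWave hk hu hp hker
  · rintro ⟨c, rfl⟩
    refine ⟨contDiff_const.mul (contDiff_planeWave k), fun z γ hγ => ?_, fun z => ?_⟩
    · simp only [planeWave_add_of_mem_LambdaStar hk hγ]
    · rw [funext (dbar2_const_mul_planeWave_add c k), dbar2_const, dbar2_const_mul_planeWave_add,
        mul_zero, add_zero]
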